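/- For every c ≥ 1 and every c̄ ≥ 1 there exists a constant C ≥ 1, depending only on c and c̄, with the following property. Let G be a simple graph on a finite vertex set V with |V| = n ≥ 2, let ρ > 0 denote its maximum density, let η ∈ (0,1), let T be a positive integer with T ≤ n^{c̄}, and suppose q ∈ (0,1] satisfies q ≥ C·ln(n)/(ρ·η²). Let F be a q-subsample of the edge set of G and H = (V, F). Then with probability at least 1 − 1/(3·T·n^{c}), every nonempty X ⊆ V simultaneously satisfies |(1/q)·ρ_H(X) − ρ_G(X)| ≤ η·ρ. -/

import Mathlib

open scoped Classical

/-- Number of edges of `G` with both endpoints in `X`, as a finset of edges. -/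
noncomputable def edgesWithin {V : Type*} [Fintype V] [DecidableEq V]
    (G : SimpleGraph V) [DecidableRel G.Adj] (X : Finset V) : Finset (Sym2 V) :=
  G.edgeFinset.filter (fun e => ∀ v ∈ e, v ∈ X)

/-- The density `ρ_G(X) = e_G(X) / |X|` of the subset `X` in `G`. -/
noncomputable def density {V : Type*} [Fintype V] [DecidableEq V]
    (G : SimpleGraph V) [DecidableRel G.Adj] (X : Finset V) : ℝ :=
  (edgesWithin G X).card / X.card

/-- The maximum density of `G`: the supremum of `ρ_G(X)` over nonempty `X ⊆ V`. -/
noncomputable def maxDensity {V : Type*} [Fintype V] [DecidableEq V]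
    (G : SimpleGraph V) [DecidableRel G.Adj] : ℝ :=
  sSup {r : ℝ | ∃ X : Finset V, X.Nonempty ∧ r = density G X}

/-- The density `ρ_H(X)` of `X` in the graph `H = (V, F)` determined by an
edge set `F`. -/
noncomputable def fdensity {V : Type*} [DecidableEq V]
    (F : Finset (Sym2 V)) (X : Finset V) : ℝ :=
  ((F.filter (fun e => ∀ v ∈ e, v ∈ X)).card : ℝ) / X.card

/-- The probability that a `q`-subsample of `E` (each element of `E` kept
independently with probability `q`) equals the subset `F ⊆ E`. -/
noncomputable def subsampleWeight {β : Type*} [DecidableEq β]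
    (E : Finset β) (q : ℝ) (F : Finset β) : ℝ :=
  q ^ F.card * (1 - q) ^ (E \ F).card

/-- The probability that a `q`-subsample `F` of `E` satisfies the predicate `P`. -/
noncomputable def subsampleProbEvent {β : Type*} [DecidableEq β]
    (E : Finset β) (q : ℝ) (P : Finset β → Prop) : ℝ :=
  ∑ F ∈ E.powerset, if P F then subsampleWeight E q F else 0


section Aux
variable {β : Type*} [DecidableEq β]

lemma weight_nonneg (E : Finset β) {q : ℝ} (h0 : 0 ≤ q) (h1 : q ≤ 1) (F : Finset β) :
    0 ≤ subsampleWeight E q F :=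
  mul_nonneg (pow_nonneg h0 _) (pow_nonneg (by linarith) _)

lemma sum_weight_mul (E A : Finset β) (hA : A ⊆ E) (q x : ℝ) :
    ∑ F ∈ E.powerset, subsampleWeight E q F * x ^ (F ∩ A).card
      = (1 - q + q * x) ^ A.card := by
  have h := Finset.prod_add (fun e => if e ∈ A then q * x else q) (fun _ => (1 - q)) E
  have hL : ∏ e ∈ E, ((if e ∈ A then q * x else q) + (1 - q)) = (1 - q + q * x) ^ A.card := by
    have : ∀ e ∈ E, ((if e ∈ A then q * x else q) + (1 - q))
        = (if e ∈ A then (1 - q + q * x) else 1) := by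
      intro e _; by_cases he : e ∈ A <;> simp [he] <;> ring
    rw [Finset.prod_congr rfl this, Finset.prod_ite_mem, Finset.inter_eq_right.mpr hA,
      Finset.prod_const]
  rw [← hL, h]
  apply Finset.sum_congr rfl
  intro t ht
  rw [Finset.mem_powerset] at ht
  rw [Finset.prod_ite, Finset.prod_const, Finset.prod_const, Finset.prod_const,
    Finset.filter_mem_eq_inter]
  have hcard : (t ∩ A).card + (t.filter (fun i => ¬ i ∈ A)).card = t.card := by
    rw [← Finset.filter_mem_eq_inter]
    exact Finset.card_filter_add_card_filter_not _
  unfold subsampleWeight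
  rw [mul_pow, ← hcard, pow_add]
  ring

lemma sum_weight (E : Finset β) (q : ℝ) :
    ∑ F ∈ E.powerset, subsampleWeight E q F = 1 := by
  have h := sum_weight_mul E ∅ (Finset.empty_subset E) q 1
  simp only [Finset.card_empty, pow_zero, Finset.inter_empty, one_pow, mul_one] at h
  exact h

lemma probEvent_nonneg (E : Finset β) {q : ℝ} (h0 : 0 ≤ q) (h1 : q ≤ 1) (P : Finset β → Prop) :
    0 ≤ subsampleProbEvent E q P := by
  apply Finset.sum_nonneg
  intro F _
  split
  · exact weight_nonneg E h0 h1 F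
  · exact le_refl 0

lemma probEvent_compl (E : Finset β) (q : ℝ) (P : Finset β → Prop) :
    subsampleProbEvent E q P = 1 - subsampleProbEvent E q (fun F => ¬ P F) := by
  have h : subsampleProbEvent E q P + subsampleProbEvent E q (fun F => ¬ P F) = 1 := by
    rw [← sum_weight E q, subsampleProbEvent, subsampleProbEvent, ← Finset.sum_add_distrib]
    apply Finset.sum_congr rfl
    intro F _
    by_cases hF : P F <;> simp [hF]
  linarith

lemma probEvent_mono (E : Finset β) {q : ℝ} (h0 : 0 ≤ q) (h1 : q ≤ 1)
    {P Q : Finset β → Prop} (h : ∀ F, P F → Q F) :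
    subsampleProbEvent E q P ≤ subsampleProbEvent E q Q := by
  apply Finset.sum_le_sum
  intro F _
  by_cases hF : P F
  · simp [hF, h F hF]
  · simp only [hF, if_false]
    split
    · exact weight_nonneg E h0 h1 F
    · exact le_refl 0

lemma probEvent_union {ι : Type*} (E : Finset β) {q : ℝ} (h0 : 0 ≤ q) (h1 : q ≤ 1)
    (s : Finset ι) (P : Finset β → Prop) (Q : ι → Finset β → Prop)
    (h : ∀ F ∈ E.powerset, P F → ∃ i ∈ s, Q i F) :
    subsampleProbEvent E q P ≤ ∑ i ∈ s, subsampleProbEvent E q (Q i) := by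
  unfold subsampleProbEvent
  rw [Finset.sum_comm]
  apply Finset.sum_le_sum
  intro F hFE
  by_cases hF : P F
  · obtain ⟨i, hi, hQ⟩ := h F hFE hF
    calc (if P F then subsampleWeight E q F else 0) = subsampleWeight E q F := by simp [hF]
    _ ≤ ∑ i ∈ s, if Q i F then subsampleWeight E q F else 0 := by
        apply Finset.single_le_sum (f := fun i => if Q i F then subsampleWeight E q F else 0)
          (fun j _ => by split; exacts [weight_nonneg E h0 h1 F, le_refl 0]) hi |>.trans_eq' ?_
        simp [hQ]
  · simp only [hF, if_false]
    apply Finset.sum_nonneg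
    intro i _
    split; exacts [weight_nonneg E h0 h1 F, le_refl 0]

lemma probEvent_le_of_indicator_le (E : Finset β) {q : ℝ} (h0 : 0 ≤ q) (h1 : q ≤ 1)
    (P : Finset β → Prop) (φ : Finset β → ℝ) (hφ : ∀ F, 0 ≤ φ F)
    (h : ∀ F, P F → 1 ≤ φ F) :
    subsampleProbEvent E q P ≤ ∑ F ∈ E.powerset, subsampleWeight E q F * φ F := by
  apply Finset.sum_le_sum
  intro F _
  by_cases hF : P F
  · simp only [hF, if_true]
    nth_rewrite 1 [← mul_one (subsampleWeight E q F)]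
    exact mul_le_mul_of_nonneg_left (h F hF) (weight_nonneg E h0 h1 F)
  · simp only [hF, if_false]
    exact mul_nonneg (weight_nonneg E h0 h1 F) (hφ F)


open Real in
lemma tail_bound (E A : Finset β) (hA : A ⊆ E) {q : ℝ} (h0 : 0 ≤ q) (h1 : q ≤ 1)
    {x : ℝ} (hx : 0 < x) (a : ℝ)
    (P : Finset β → Prop)
    (hP : ∀ F, P F → x ^ a ≤ x ^ ((F ∩ A).card : ℕ)) :
    subsampleProbEvent E q P ≤ Real.exp ((A.card : ℝ) * (q * (x - 1)) - a * Real.log x) := by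
  have key : subsampleProbEvent E q P ≤
      ∑ F ∈ E.powerset, subsampleWeight E q F * (x ^ (F ∩ A).card * x ^ (-a)) := by
    apply probEvent_le_of_indicator_le E h0 h1 P _ ?_ ?_
    · intro F
      positivity
    · intro F hF
      have h2 : x ^ a * x ^ (-a) ≤ (x ^ ((F ∩ A).card : ℕ)) * x ^ (-a) :=
        mul_le_mul_of_nonneg_right (hP F hF) (Real.rpow_nonneg hx.le _)
      rwa [← Real.rpow_add hx, add_neg_cancel, Real.rpow_zero] at h2
  have key2 : ∑ F ∈ E.powerset, subsampleWeight E q F * (x ^ (F ∩ A).card * x ^ (-a))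
      = (1 - q + q * x) ^ A.card * x ^ (-a) := by
    rw [← sum_weight_mul E A hA q x, Finset.sum_mul]
    exact Finset.sum_congr rfl fun F _ => by ring
  have hbase : 0 ≤ 1 - q + q * x := by nlinarith
  have h3 : (1 - q + q * x) ^ A.card ≤ Real.exp (q * (x - 1)) ^ A.card := by
    apply pow_le_pow_left₀ hbase
    have := Real.add_one_le_exp (q * (x - 1))
    linarith
  have h4 : x ^ (-a) = Real.exp (-(a * Real.log x)) := by
    rw [Real.rpow_def_of_pos hx]; ring_nf
  calc subsampleProbEvent E q P ≤ (1 - q + q * x) ^ A.card * x ^ (-a) := key2 ▸ key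
    _ ≤ Real.exp (q * (x - 1)) ^ A.card * x ^ (-a) :=
        mul_le_mul_of_nonneg_right h3 (Real.rpow_nonneg hx.le _)
    _ = Real.exp ((A.card : ℝ) * (q * (x - 1)) - a * Real.log x) := by
        rw [h4, ← Real.exp_nat_mul, ← Real.exp_add]
        ring_nf

lemma probEvent_or (E : Finset β) {q : ℝ} (h0 : 0 ≤ q) (h1 : q ≤ 1)
    (P Q : Finset β → Prop) :
    subsampleProbEvent E q (fun F => P F ∨ Q F) ≤
      subsampleProbEvent E q P + subsampleProbEvent E q Q := by
  unfold subsampleProbEvent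
  rw [← Finset.sum_add_distrib]
  apply Finset.sum_le_sum
  intro F _
  have hw := weight_nonneg E h0 h1 F
  by_cases hP : P F <;> by_cases hQ : Q F <;> simp [hP, hQ] <;> linarith

set_option maxHeartbeats 1000000 in
open Real in
lemma chernoff (E A : Finset β) (hA : A ⊆ E) {q η ρ k : ℝ}
    (hq0 : 0 < q) (hq1 : q ≤ 1) (hη0 : 0 < η) (hη1 : η < 1) (hρ : 0 < ρ)
    (hk : 1 ≤ k) (hm : (A.card : ℝ) ≤ ρ * k) :
    subsampleProbEvent E q
      (fun F => ¬ |((F ∩ A).card : ℝ) - q * (A.card : ℝ)| ≤ q * η * ρ * k) ≤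
      2 * Real.exp (-(q * ρ * k * η ^ 2 / 32)) := by
  set m : ℝ := (A.card : ℝ) with hmdef
  have hm0 : 0 ≤ m := Nat.cast_nonneg _
  set t : ℝ := q * η * ρ * k with htdef
  have ht0 : 0 < t := by positivity
  set ε : ℝ := η / 4 with hεdef
  have hε0 : 0 < ε := by positivity
  have hε4 : ε ≤ 1/4 := by rw [hεdef]; linarith
  have hqm : q * m ≤ t / η := by
    have h1 : t / η = q * ρ * k := by field_simp [htdef]; ring
    rw [h1]
    nlinarith
  have htε : t * ε = q * ρ * k * η ^ 2 / 4 := by rw [htdef, hεdef]; ring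
  have htεpos : 0 < t * ε := mul_pos ht0 hε0
  have hqmε : q * m * ε ^ 2 ≤ t * ε / 4 := by
    have h9 : q * m * ε ^ 2 ≤ (t / η) * ε ^ 2 := by nlinarith
    calc q * m * ε ^ 2 ≤ (t / η) * ε ^ 2 := h9
      _ = t * ε / 4 := by rw [hεdef]; field_simp
  have htε2 : t * ε ^ 2 ≤ t * ε / 4 := by
    nlinarith [mul_nonneg (mul_nonneg ht0.le hε0.le) (show (0:ℝ) ≤ 1/4 - ε by linarith)]
  -- upper tail
  have hupper : subsampleProbEvent E q (fun F => q * m + t ≤ ((F ∩ A).card : ℝ)) ≤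
      Real.exp (-(q * ρ * k * η ^ 2 / 32)) := by
    have hx : (0:ℝ) < 1 + ε := by linarith
    have hb := tail_bound E A hA hq0.le hq1 hx (q * m + t)
      (fun F => q * m + t ≤ ((F ∩ A).card : ℝ)) ?_
    · refine hb.trans (Real.exp_le_exp.mpr ?_)
      rw [← hmdef]
      have hlog : ε - ε ^ 2 ≤ Real.log (1 + ε) := by
        have h2 := Real.one_sub_inv_le_log_of_pos hx
        have h3 : 1 - (1 + ε)⁻¹ = ε / (1 + ε) := by field_simp; ring
        rw [h3] at h2
        have h4 : ε - ε ^ 2 ≤ ε / (1 + ε) := by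
          rw [le_div_iff₀ hx]; nlinarith
        linarith
      have ha0 : 0 ≤ q * m + t := by positivity
      have h5 : (q * m + t) * (ε - ε ^ 2) ≤ (q * m + t) * Real.log (1 + ε) :=
        mul_le_mul_of_nonneg_left hlog ha0
      have h6 : m * (q * (1 + ε - 1)) - (q * m + t) * Real.log (1 + ε)
          ≤ q * m * ε - (q * m + t) * (ε - ε ^ 2) := by
        have : m * (q * (1 + ε - 1)) = q * m * ε := by ring
        linarith
      have h7 : q * m * ε - (q * m + t) * (ε - ε ^ 2)
          = q * m * ε ^ 2 + t * ε ^ 2 - t * ε := by ring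
      linarith
    · intro F hF
      rw [← Real.rpow_natCast (1 + ε) ((F ∩ A).card)]
      exact Real.rpow_le_rpow_of_exponent_le (by linarith) hF
  -- lower tail
  have hlower : subsampleProbEvent E q (fun F => ((F ∩ A).card : ℝ) ≤ q * m - t) ≤
      Real.exp (-(q * ρ * k * η ^ 2 / 32)) := by
    have hx : (0:ℝ) < 1 - ε := by linarith
    have hb := tail_bound E A hA hq0.le hq1 hx (q * m - t)
      (fun F => ((F ∩ A).card : ℝ) ≤ q * m - t) ?_
    · refine hb.trans (Real.exp_le_exp.mpr ?_)
      rw [← hmdef]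
      set L : ℝ := -Real.log (1 - ε) with hLdef
      have hL1 : ε ≤ L := by
        have h2 := Real.log_le_sub_one_of_pos hx
        rw [hLdef]; linarith
      have hL2 : L ≤ ε + 2 * ε ^ 2 := by
        have h2 := Real.one_sub_inv_le_log_of_pos hx
        have h3 : (1:ℝ) - (1 - ε)⁻¹ = -(ε / (1 - ε)) := by field_simp; ring
        rw [h3] at h2
        have h4 : ε / (1 - ε) ≤ ε + 2 * ε ^ 2 := by
          rw [div_le_iff₀ hx]; nlinarith
        rw [hLdef]; linarith
      have hcase : (q * m - t) * L ≤ q * m * ε + 2 * (q * m * ε ^ 2) - t * ε := by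
        rcases le_or_gt 0 (q * m - t) with hs | hs
        · have := mul_le_mul_of_nonneg_left hL2 hs
          nlinarith [mul_pos ht0 (mul_pos hε0 hε0)]
        · have h10 : (q * m - t) * L ≤ (q * m - t) * ε := by nlinarith
          nlinarith [mul_nonneg (mul_nonneg (mul_nonneg hq0.le hm0) hε0.le) hε0.le]
      have hL0 : m * (q * (1 - ε - 1)) - (q * m - t) * Real.log (1 - ε)
          = -(q * m * ε) + (q * m - t) * L := by rw [hLdef]; ring
      rw [hL0]
      linarith
    · intro F hF
      rw [← Real.rpow_natCast (1 - ε) ((F ∩ A).card)]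
      exact Real.rpow_le_rpow_of_exponent_ge hx (by linarith) hF
  have hsplit : subsampleProbEvent E q
      (fun F => ¬ |((F ∩ A).card : ℝ) - q * (A.card : ℝ)| ≤ q * η * ρ * k) ≤
      subsampleProbEvent E q (fun F => q * m + t ≤ ((F ∩ A).card : ℝ)) +
      subsampleProbEvent E q (fun F => ((F ∩ A).card : ℝ) ≤ q * m - t) := by
    refine le_trans (probEvent_mono E hq0.le hq1 ?_) (probEvent_or E hq0.le hq1 _ _)
    intro F hF
    rw [not_le, lt_abs] at hF
    rcases hF with h | h
    · left; linarith
    · right; linarith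
  linarith [hsplit, hupper, hlower]

lemma sum_pow_card {V : Type*} [Fintype V] [DecidableEq V] (a : ℝ) :
    ∑ X ∈ Finset.univ.powerset.filter (fun X : Finset V => X.Nonempty), a ^ X.card
      = (1 + a) ^ (Fintype.card V) - 1 := by
  have h := Finset.prod_add (fun _ : V => a) (fun _ : V => (1:ℝ)) Finset.univ
  simp only [Finset.prod_const, one_pow, mul_one] at h
  have h2 : ∑ X ∈ (Finset.univ : Finset V).powerset, a ^ X.card = (a + 1) ^ (Fintype.card V) := by
    rw [← Finset.card_univ, ← h]
  rw [← Finset.sum_filter_add_sum_filter_not (Finset.univ : Finset V).powerset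
    (fun X => X.Nonempty) (fun X => a ^ X.card)] at h2
  have h3 : (Finset.univ : Finset V).powerset.filter (fun X => ¬ X.Nonempty) = {∅} := by
    ext X
    simp [Finset.not_nonempty_iff_eq_empty]
  rw [h3, Finset.sum_singleton] at h2
  simp only [Finset.card_empty, pow_zero] at h2
  have : (a + 1) = (1 + a) := by ring
  linarith [h2, this ▸ h2]

lemma density_le_maxDensity {V : Type*} [Fintype V] [DecidableEq V]
    (G : SimpleGraph V) [DecidableRel G.Adj] (X : Finset V) (hX : X.Nonempty) :
    density G X ≤ maxDensity G := by
  apply le_csSup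
  · apply Set.Finite.bddAbove
    apply Set.Finite.subset (Set.finite_range (density G))
    rintro r ⟨Y, _, rfl⟩
    exact Set.mem_range_self Y
  · exact ⟨X, hX, rfl⟩

lemma mem_edgesWithin {V : Type*} [Fintype V] [DecidableEq V] (G : SimpleGraph V)
    [DecidableRel G.Adj] (X : Finset V) (e : Sym2 V) :
    e ∈ edgesWithin G X ↔ e ∈ G.edgeFinset ∧ ∀ v ∈ e, v ∈ X := by
  unfold edgesWithin
  exact Finset.mem_filter

lemma fdensity_eq {V : Type*} [Fintype V] [DecidableEq V] (G : SimpleGraph V)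
    [DecidableRel G.Adj] (X : Finset V) (F : Finset (Sym2 V)) (hF : F ⊆ G.edgeFinset) :
    fdensity F X = ((F ∩ edgesWithin G X).card : ℝ) / (X.card : ℝ) := by
  unfold fdensity
  rw [Finset.filter_congr_decidable]
  have h : F.filter (fun e => ∀ v ∈ e, v ∈ X) = F ∩ edgesWithin G X := by
    ext e
    rw [Finset.mem_filter, Finset.mem_inter, mem_edgesWithin]
    exact ⟨fun ⟨he, hp⟩ => ⟨he, hF he, hp⟩, fun ⟨he, _, hp⟩ => ⟨he, hp⟩⟩
  rw [h]

end Aux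

set_option maxHeartbeats 1000000 in
/-- Corollary of uniform subsampling used throughout the
analysis: for every `c ≥ 1` and `c̄ ≥ 1` there is a constant `C ≥ 1` depending
only on `c` and `c̄` such that whenever `q ≥ C ln(n) / (ρ η²)`, a `q`-subsample
`F` of the edge set of `G` satisfies, with probability at least
`1 - 1/(3 T n^c)` (for any `1 ≤ T ≤ n^c̄`), that every nonempty `X ⊆ V`
simultaneously has `|(1/q) ρ_H(X) - ρ_G(X)| ≤ η ρ`. -/
theorem stmt4 (c cbar : ℝ) (hc : 1 ≤ c) (hcbar : 1 ≤ cbar) :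
    ∃ C : ℝ, 1 ≤ C ∧
      ∀ (V : Type) [Fintype V] [DecidableEq V]
        (G : SimpleGraph V) [DecidableRel G.Adj],
        2 ≤ Fintype.card V →
        0 < maxDensity G →
        ∀ η q : ℝ, η ∈ Set.Ioo (0 : ℝ) 1 → q ∈ Set.Ioc (0 : ℝ) 1 →
        C * Real.log (Fintype.card V) / (maxDensity G * η ^ 2) ≤ q →
        ∀ T : ℕ, 1 ≤ T → (T : ℝ) ≤ (Fintype.card V : ℝ) ^ cbar →
        1 - 1 / (3 * (T : ℝ) * (Fintype.card V : ℝ) ^ c) ≤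
          subsampleProbEvent G.edgeFinset q
            (fun F => ∀ X : Finset V, X.Nonempty →
              |(1 / q) * fdensity F X - density G X| ≤ η * maxDensity G) := by
  classical
  refine ⟨32 * (c + cbar + 6), by nlinarith, ?_⟩
  intro V _ _ G _ hn hρ0 η q hη hq hCq T hT hTn
  obtain ⟨hη0, hη1⟩ := hη
  obtain ⟨hq0, hq1⟩ := hq
  have hn2 : (2:ℝ) ≤ (Fintype.card V : ℝ) := by exact_mod_cast hn
  have hn0 : (0:ℝ) < (Fintype.card V : ℝ) := by linarith
  have hlogn : 0 < Real.log (Fintype.card V) := Real.log_pos (by linarith)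
  set nR : ℝ := (Fintype.card V : ℝ) with hnRdef
  set ρ : ℝ := maxDensity G with hρdef
  set E : Finset (Sym2 V) := G.edgeFinset with hEdef
  have hqρ : 32 * (c + cbar + 6) * Real.log nR ≤ q * (ρ * η ^ 2) := by
    have hpos : 0 < ρ * η ^ 2 := by positivity
    have := (div_le_iff₀ hpos).mp hCq
    linarith
  set w : ℝ := q * ρ * η ^ 2 / 32 with hwdef
  have hw : (c + cbar + 6) * Real.log nR ≤ w := by
    rw [hwdef]; nlinarith
  have hw0 : 0 < w := lt_of_lt_of_le (by positivity) hw
  set a : ℝ := Real.exp (-w) with hadef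
  have ha0 : 0 < a := Real.exp_pos _
  set s : Finset (Finset V) := Finset.univ.powerset.filter (fun X => X.Nonempty) with hsdef
  set Bad : Finset V → Finset (Sym2 V) → Prop := fun X F =>
    ¬ |((F ∩ edgesWithin G X).card : ℝ) - q * ((edgesWithin G X).card : ℝ)| ≤ q * η * ρ * (X.card : ℝ) with hBaddef
  set P : Finset (Sym2 V) → Prop := fun F => ∀ X : Finset V, X.Nonempty →
    |(1 / q) * fdensity F X - density G X| ≤ η * maxDensity G with hPdef
  rw [show (subsampleProbEvent E q P) = 1 - subsampleProbEvent E q (fun F => ¬ P F) from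
    probEvent_compl E q P]
  apply sub_le_sub_left
  -- step 1: union bound
  have step1 : subsampleProbEvent E q (fun F => ¬ P F) ≤
      ∑ X ∈ s, subsampleProbEvent E q (Bad X) := by
    apply probEvent_union E hq0.le hq1 s _ Bad
    intro F hFE hnP
    have hnP' : ¬ ∀ X : Finset V, X.Nonempty →
        |(1 / q) * fdensity F X - density G X| ≤ η * maxDensity G := hnP
    push_neg at hnP'
    obtain ⟨X, hXne, hX⟩ := hnP'
    refine ⟨X, by simp [hsdef, hXne], ?_⟩
    have hFsub : F ⊆ E := Finset.mem_powerset.mp hFE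
    have hk0 : (0:ℝ) < (X.card : ℝ) := by
      exact_mod_cast Finset.card_pos.mpr hXne
    rw [hBaddef]
    intro habs
    apply absurd hX
    rw [not_lt]
    have hfd : fdensity F X = ((F ∩ edgesWithin G X).card : ℝ) / (X.card : ℝ) :=
      fdensity_eq G X F hFsub
    have hde : density G X = ((edgesWithin G X).card : ℝ) / (X.card : ℝ) := rfl
    rw [hfd, hde]
    have hcomp : (1 / q) * (((F ∩ edgesWithin G X).card : ℝ) / (X.card : ℝ))
        - ((edgesWithin G X).card : ℝ) / (X.card : ℝ)
        = (((F ∩ edgesWithin G X).card : ℝ) - q * ((edgesWithin G X).card : ℝ)) / (q * (X.card : ℝ)) := by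
      field_simp
    rw [hcomp, abs_div, abs_of_pos (by positivity : (0:ℝ) < q * (X.card : ℝ)),
      div_le_iff₀ (by positivity : (0:ℝ) < q * (X.card : ℝ))]
    calc |((F ∩ edgesWithin G X).card : ℝ) - q * ((edgesWithin G X).card : ℝ)| ≤ q * η * ρ * (X.card : ℝ) := habs
      _ = η * maxDensity G * (q * (X.card : ℝ)) := by rw [hρdef]; ring
  -- step 2: chernoff per subset
  have step2 : ∀ X ∈ s, subsampleProbEvent E q (Bad X) ≤ 2 * a ^ X.card := by
    intro X hXs
    have hXne : X.Nonempty := (Finset.mem_filter.mp hXs).2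
    have hk0 : (0:ℝ) < (X.card : ℝ) := by exact_mod_cast Finset.card_pos.mpr hXne
    have hk1 : (1:ℝ) ≤ (X.card : ℝ) := by
      exact_mod_cast Finset.card_pos.mpr hXne
    have hm : ((edgesWithin G X).card : ℝ) ≤ ρ * (X.card : ℝ) := by
      have hd := density_le_maxDensity G X hXne
      rw [density] at hd
      rw [← hρdef] at hd
      calc ((edgesWithin G X).card : ℝ) = ((edgesWithin G X).card : ℝ) / (X.card : ℝ) * (X.card : ℝ) := by
            field_simp
        _ ≤ ρ * (X.card : ℝ) := by
            apply mul_le_mul_of_nonneg_right _ hk0.le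
            exact hd
    have hch := chernoff E (edgesWithin G X) (Finset.filter_subset _ _) hq0 hq1 hη0 hη1 hρ0 hk1 hm
    refine hch.trans_eq ?_
    rw [hadef, ← Real.exp_nat_mul]
    congr 1
    push_cast
    rw [hwdef]
    congr 1
    ring
  -- step 3: sum the geometric bound
  have step3 : ∑ X ∈ s, (2 * a ^ X.card) = 2 * ((1 + a) ^ (Fintype.card V) - 1) := by
    rw [← Finset.mul_sum, hsdef, sum_pow_card]
  have hna : nR * a ≤ Real.exp (Real.log nR - w) := by
    rw [Real.exp_sub, Real.exp_log hn0, hadef, Real.exp_neg]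
    rw [div_eq_mul_inv]
  set nn : ℕ := Fintype.card V with hnndef
  have h1a : (1 + a) ^ nn ≤ Real.exp (nR * a) := by
    calc (1 + a) ^ nn ≤ Real.exp a ^ nn := by
          apply pow_le_pow_left₀ (by positivity)
          linarith [Real.add_one_le_exp a]
      _ = Real.exp ((nn : ℝ) * a) := (Real.exp_nat_mul a nn).symm
      _ = Real.exp (nR * a) := by rw [hnRdef]
  have hx0 : 0 ≤ nR * a := by positivity
  have hx1 : nR * a ≤ 1 := by
    have h8 : (8:ℝ) * Real.log nR ≤ (c + cbar + 6) * Real.log nR :=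
      mul_le_mul_of_nonneg_right (by linarith) hlogn.le
    have hle : Real.log nR - w ≤ 0 := by linarith
    calc nR * a ≤ Real.exp (Real.log nR - w) := hna
      _ ≤ Real.exp 0 := Real.exp_le_exp.mpr hle
      _ = 1 := Real.exp_zero
  have hexp1 : Real.exp (nR * a) - 1 ≤ 3 * (nR * a) := by
    set x : ℝ := nR * a with hxdef
    have h := Real.add_one_le_exp (-x)
    rw [Real.exp_neg] at h
    have hex := Real.exp_pos x
    have h2 : (1 - x) * Real.exp x ≤ 1 := by
      have h2' := mul_le_mul_of_nonneg_right h hex.le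
      rw [inv_mul_cancel₀ hex.ne'] at h2'
      linarith
    have h3 : Real.exp x ≤ 3 := by
      have := Real.exp_le_exp.mpr hx1
      nlinarith [Real.exp_one_lt_d9]
    nlinarith
  have step4 : subsampleProbEvent E q (fun F => ¬ P F) ≤ 6 * Real.exp (Real.log nR - w) := by
    calc subsampleProbEvent E q (fun F => ¬ P F)
        ≤ ∑ X ∈ s, subsampleProbEvent E q (Bad X) := step1
      _ ≤ ∑ X ∈ s, (2 * a ^ X.card) := Finset.sum_le_sum step2
      _ = 2 * ((1 + a) ^ nn - 1) := step3
      _ ≤ 2 * (Real.exp (nR * a) - 1) := by linarith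
      _ ≤ 2 * (3 * (nR * a)) := by linarith
      _ ≤ 6 * Real.exp (Real.log nR - w) := by linarith
  refine step4.trans ?_
  have hTpos : (0:ℝ) < (T : ℝ) := by exact_mod_cast hT
  have hrc : nR ^ c = Real.exp (c * Real.log nR) := by
    rw [Real.rpow_def_of_pos hn0, mul_comm]
  have hrcb : nR ^ cbar = Real.exp (cbar * Real.log nR) := by
    rw [Real.rpow_def_of_pos hn0, mul_comm]
  have hden_pos : (0:ℝ) < 3 * (T : ℝ) * nR ^ c := by
    have : (0:ℝ) < nR ^ c := Real.rpow_pos_of_pos hn0 c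
    positivity
  rw [le_div_iff₀ hden_pos]
  have hTexp : (T : ℝ) ≤ Real.exp (cbar * Real.log nR) := hrcb ▸ hTn
  calc 6 * Real.exp (Real.log nR - w) * (3 * (T : ℝ) * nR ^ c)
      ≤ 6 * Real.exp (Real.log nR - w) *
        (3 * Real.exp (cbar * Real.log nR) * Real.exp (c * Real.log nR)) := by
        rw [hrc]
        apply mul_le_mul_of_nonneg_left _ (by positivity)
        apply mul_le_mul_of_nonneg_right _ (Real.exp_pos _).le
        linarith
    _ = 18 * Real.exp (Real.log nR - w + cbar * Real.log nR + c * Real.log nR) := by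
        rw [Real.exp_add, Real.exp_add]
        ring
    _ ≤ 18 * Real.exp (-(5 * Real.log nR)) := by
        apply mul_le_mul_of_nonneg_left (Real.exp_le_exp.mpr ?_) (by norm_num)
        have hw' := hw
        ring_nf at hw' ⊢
        linarith
    _ ≤ 1 := by
        have hlog2 : Real.log 2 ≤ Real.log nR := Real.log_le_log (by norm_num) hn2
        have h32 : Real.exp (-(5 * Real.log nR)) ≤ Real.exp (-(Real.log 32)) := by
          apply Real.exp_le_exp.mpr
          have : Real.log (32:ℝ) = 5 * Real.log 2 := by
            rw [show (32:ℝ) = 2 ^ (5:ℕ) by norm_num, Real.log_pow]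
            push_cast; ring
          rw [this]
          linarith
        have h33 : Real.exp (-(Real.log 32)) = (32:ℝ)⁻¹ := by
          rw [Real.exp_neg, Real.exp_log (by norm_num : (0:ℝ) < 32)]
        rw [h33] at h32
        nlinarith [Real.exp_pos (-(5 * Real.log nR))]
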